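/- Let T be a Galton–Watson tree with offspring distribution ξ satisfying P(survival) = p > 0, and fix integers k ≥ 1 and ω ≥ 2 with ω²/(k+1) ≥ ω·log²n for a parameter n. Then P(∑_{j=0}^k Z_j ≥ ω² and Z_k < ω) ≤ P(Bin(⌈ω²/(k+1)⌉, p) < ω), where Z_j = |T_j| is the size of generation j. -/

import Mathlib

/-- Distribution of the sum of `a` iid copies of the offspring distribution `ξ`. -/
noncomputable def sumIid (ξ : PMF ℕ) : ℕ → PMF ℕ
  | 0 => PMF.pure 0
  | a + 1 => (sumIid ξ a).bind (fun y => ξ.map (fun x => x + y))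

/-- `m` steps of the Galton–Watson generation-size chain started from `a`. -/
noncomputable def gwIter (ξ : PMF ℕ) : ℕ → ℕ → PMF ℕ
  | 0 => fun a => PMF.pure a
  | m + 1 => fun a => (sumIid ξ a).bind (gwIter ξ m)

/-- The distribution of `Z_k`, generation `k` of a Galton–Watson process with
offspring distribution `ξ` started from one individual. -/
noncomputable def gwGen (ξ : PMF ℕ) (k : ℕ) : PMF ℕ := gwIter ξ k 1

/-- The joint law of the trajectory `(Z_k, Z_{k-1}, …, Z_0)` (most recent
generation first), as a PMF on lists of length `k+1`, with `Z_0 = 1`. -/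
noncomputable def gwTraj (ξ : PMF ℕ) : ℕ → PMF (List ℕ)
  | 0 => PMF.pure [1]
  | k + 1 => (gwTraj ξ k).bind (fun l => (sumIid ξ l.headI).map (fun z => z :: l))

/-- `binomPr N k p` is the probability that a `Bin(N,p)` random variable equals `k`. -/
noncomputable def binomPr (N k : ℕ) (p : ℝ) : ℝ :=
  (N.choose k : ℝ) * p ^ k * (1 - p) ^ (N - k)

/-!
By pigeonhole, a trajectory with `∑ Z_j ≥ ω²` has a generation of size at least
`N = ⌈ω²/(k+1)⌉`. Split according to the first such generation `j`: these events are disjoint,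
and by the Markov property, given the trajectory up to `j`, `Z_k` is a sum of `Z_j ≥ N`
independent copies of `Z_{k-j}`. Each copy is nonzero with probability at least `p`, since
extinction by time `k - j` is at most as likely as extinction, so `Z_k` stochastically dominates
`Bin(N, p)` on each of these events.
-/

namespace PMF

variable {α ι : Type*} (μ : PMF α)

lemma toOuterMeasure_apply_le_one (s : Set α) : μ.toOuterMeasure s ≤ 1 :=
  (MeasureTheory.measure_mono (Set.subset_univ s)).trans_eq
    ((μ.toOuterMeasure_apply_eq_one_iff _).2 (Set.subset_univ _))

lemma sum_toOuterMeasure_le_one {I : Finset ι} {s : ι → Set α}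
    (hs : (I : Set ι).PairwiseDisjoint s) : ∑ i ∈ I, μ.toOuterMeasure (s i) ≤ 1 := by
  simp only [toOuterMeasure_apply]
  rw [← Summable.tsum_finsetSum fun i _ => ENNReal.summable]
  simp only [← Finset.indicator_biUnion_apply I s hs, ← toOuterMeasure_apply]
  exact μ.toOuterMeasure_apply_le_one _

end PMF

open scoped ENNReal
open Set

namespace GaltonWatson

section Convolution

variable {α : Type*} [AddCommMonoid α]

noncomputable def conv (μ ν : PMF α) : PMF α := μ.bind fun y => ν.map (· + y)

lemma conv_comm (μ ν : PMF α) : conv μ ν = conv ν μ := by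
  simp only [conv, ← PMF.bind_pure_comp]
  rw [PMF.bind_comm]
  simp only [Function.comp_def, add_comm]

lemma bind_conv {β : Type*} (μ ν : PMF α) (f : α → PMF β) :
    (conv μ ν).bind f = μ.bind fun y => ν.bind fun x => f (x + y) := by
  simp only [conv, PMF.bind_bind, PMF.bind_map]
  rfl

lemma conv_assoc (μ ν ρ : PMF α) : conv (conv μ ν) ρ = conv μ (conv ν ρ) := by
  simp only [conv, ← PMF.bind_pure_comp, PMF.bind_bind, PMF.pure_bind, Function.comp_def,
    add_assoc]

lemma conv_pure_zero (μ : PMF α) : conv μ (PMF.pure 0) = μ := by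
  simp only [conv, PMF.pure_map, zero_add, PMF.bind_pure]

end Convolution

lemma sumIid_succ (ξ : PMF ℕ) (a : ℕ) : sumIid ξ (a + 1) = conv (sumIid ξ a) ξ := rfl

lemma sumIid_add (ξ : PMF ℕ) (a b : ℕ) :
    sumIid ξ (a + b) = conv (sumIid ξ a) (sumIid ξ b) := by
  induction b with
  | zero => exact (conv_pure_zero _).symm
  | succ b ih => rw [← add_assoc, sumIid_succ, sumIid_succ, ih, conv_assoc]

lemma gwIter_apply_zero (ξ : PMF ℕ) (m : ℕ) : gwIter ξ m 0 = PMF.pure 0 := by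
  induction m with
  | zero => rfl
  | succ m ih => exact (PMF.pure_bind _ _).trans ih

lemma gwIter_add (ξ : PMF ℕ) (m a b : ℕ) :
    gwIter ξ m (a + b) = conv (gwIter ξ m a) (gwIter ξ m b) := by
  induction m generalizing a b with
  | zero =>
    change PMF.pure (a + b) = conv (PMF.pure a) (PMF.pure b)
    rw [conv, PMF.pure_bind, PMF.pure_map, add_comm]
  | succ m ih =>
    change (sumIid ξ (a + b)).bind (gwIter ξ m) =
      conv ((sumIid ξ a).bind (gwIter ξ m)) ((sumIid ξ b).bind (gwIter ξ m))
    rw [sumIid_add, bind_conv, conv, PMF.bind_bind]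
    refine congrArg _ (funext fun y => ?_)
    simp only [PMF.map_bind]
    rw [PMF.bind_comm]
    refine congrArg _ (funext fun x => ?_)
    rw [ih, conv_comm]
    rfl

theorem gwIter_eq_sumIid (ξ : PMF ℕ) (m a : ℕ) : gwIter ξ m a = sumIid (gwGen ξ m) a := by
  induction a with
  | zero => exact gwIter_apply_zero ξ m
  | succ a ih => rw [gwIter_add, ih, sumIid_succ, gwGen]

def StochLE (μ ν : PMF ℕ) : Prop := ∀ t, ν.toOuterMeasure (Iio t) ≤ μ.toOuterMeasure (Iio t)

lemma StochLE.trans {μ ν ρ : PMF ℕ} (h₁ : StochLE μ ν) (h₂ : StochLE ν ρ) : StochLE μ ρ :=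
  fun t => (h₂ t).trans (h₁ t)

lemma toOuterMeasure_conv_Iio (μ ν : PMF ℕ) (t : ℕ) :
    (conv μ ν).toOuterMeasure (Iio t) = ∑' y, μ y * ν.toOuterMeasure (Iio (t - y)) := by
  rw [conv, PMF.toOuterMeasure_bind_apply]
  refine tsum_congr fun y => ?_
  rw [PMF.toOuterMeasure_map_apply]
  congr 2
  ext x
  simp [lt_tsub_iff_right]

lemma StochLE.conv_right (μ : PMF ℕ) {ν ν' : PMF ℕ} (h : StochLE ν ν') :
    StochLE (conv μ ν) (conv μ ν') := fun t => by
  simp only [toOuterMeasure_conv_Iio]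
  exact ENNReal.tsum_le_tsum fun y => mul_le_mul_right (h _) _

lemma StochLE.conv {μ μ' ν ν' : PMF ℕ} (hμ : StochLE μ μ') (hν : StochLE ν ν') :
    StochLE (conv μ ν) (conv μ' ν') := by
  refine (StochLE.conv_right μ hν).trans ?_
  rw [conv_comm μ, conv_comm μ']
  exact StochLE.conv_right ν' hμ

lemma StochLE.sumIid {μ ν : PMF ℕ} (h : StochLE μ ν) (a : ℕ) :
    StochLE (sumIid μ a) (sumIid ν a) := by
  induction a with
  | zero => exact fun t => le_rfl
  | succ a ih => exact ih.conv h

lemma stochLE_conv_left (μ ν : PMF ℕ) : StochLE ν (conv μ ν) := fun t =>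
  calc (conv μ ν).toOuterMeasure (Iio t)
      ≤ ∑' y, μ y * ν.toOuterMeasure (Iio t) := by
        rw [toOuterMeasure_conv_Iio]
        gcongr with y
        exact Nat.sub_le t y
    _ = ν.toOuterMeasure (Iio t) := by rw [ENNReal.tsum_mul_right, PMF.tsum_coe, one_mul]

lemma stochLE_sumIid_of_le (ν : PMF ℕ) {a b : ℕ} (h : a ≤ b) :
    StochLE (sumIid ν a) (sumIid ν b) := by
  obtain ⟨d, rfl⟩ := Nat.exists_eq_add_of_le' h
  rw [sumIid_add]
  exact stochLE_conv_left _ _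

lemma map_add_apply (ν : PMF ℕ) (y z : ℕ) :
    ν.map (· + y) z = if y ≤ z then ν (z - y) else 0 := by
  rw [PMF.map_apply]
  split_ifs with h
  · rw [tsum_eq_single (z - y) fun x hx => ?_, if_pos (by omega)]
    exact if_neg (by omega)
  · exact ENNReal.tsum_eq_zero.2 fun x => if_neg (by omega)

noncomputable def bernoulli (q : ℝ≥0∞) (hq : q ≤ 1) : PMF ℕ :=
  PMF.ofFinset (fun n => if n = 0 then 1 - q else if n = 1 then q else 0) {0, 1}
    (by simp [tsub_add_cancel_of_le hq])
    (fun n hn => by simp_all)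

section Bernoulli

variable {q : ℝ≥0∞} (hq : q ≤ 1)

lemma bernoulli_apply (n : ℕ) :
    bernoulli q hq n = if n = 0 then 1 - q else if n = 1 then q else 0 := rfl

lemma stochLE_bernoulli {μ : PMF ℕ} (h : μ 0 ≤ 1 - q) : StochLE (bernoulli q hq) μ := by
  rintro (_ | _ | t)
  · simp
  · simpa [PMF.toOuterMeasure_apply_singleton, bernoulli_apply] using h
  · calc μ.toOuterMeasure (Iio (t + 2)) ≤ 1 := μ.toOuterMeasure_apply_le_one _
      _ = (bernoulli q hq).toOuterMeasure (Iio (t + 2)) := by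
        refine ((PMF.toOuterMeasure_apply_eq_one_iff _ _).2 fun n hn => ?_).symm
        by_contra hge
        rw [mem_Iio, not_lt] at hge
        exact hn (by rw [bernoulli_apply, if_neg (by omega), if_neg (by omega)])

lemma conv_bernoulli_apply (μ : PMF ℕ) (z : ℕ) :
    conv μ (bernoulli q hq) z = (1 - q) * μ z + q * (if 1 ≤ z then μ (z - 1) else 0) := by
  rw [conv_comm, conv, PMF.bind_apply, tsum_eq_sum (s := {0, 1}) fun x hx => ?_,
    Finset.sum_pair zero_ne_one, map_add_apply, map_add_apply]
  · simp [bernoulli_apply]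
  · simp only [Finset.mem_insert, Finset.mem_singleton, not_or] at hx
    simp [bernoulli_apply, hx.1, hx.2]

end Bernoulli

lemma binomPr_nonneg {p : ℝ} (hp0 : 0 ≤ p) (hp1 : p ≤ 1) (N z : ℕ) : 0 ≤ binomPr N z p := by
  unfold binomPr
  have : 0 ≤ 1 - p := by linarith
  positivity

lemma binomPr_succ_zero (N : ℕ) (p : ℝ) : binomPr (N + 1) 0 p = (1 - p) * binomPr N 0 p := by
  simp [binomPr, pow_succ, mul_comm]

lemma binomPr_succ_succ (N z : ℕ) (p : ℝ) :
    binomPr (N + 1) (z + 1) p = (1 - p) * binomPr N (z + 1) p + p * binomPr N z p := by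
  unfold binomPr
  rcases lt_trichotomy z N with h | rfl | h
  · rw [Nat.succ_sub_succ, Nat.choose_succ_succ', show N - z = N - (z + 1) + 1 by omega]
    push_cast
    ring
  · simp [pow_succ, mul_comm]
  · simp [Nat.choose_eq_zero_of_lt h, Nat.choose_eq_zero_of_lt (h.trans z.lt_succ_self),
      Nat.choose_eq_zero_of_lt (Nat.succ_lt_succ h)]

lemma sumIid_bernoulli_apply {p : ℝ} (hp0 : 0 ≤ p) (hp1 : p ≤ 1) (N z : ℕ) :
    sumIid (bernoulli (ENNReal.ofReal p) (ENNReal.ofReal_le_one.2 hp1)) N z =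
      ENNReal.ofReal (binomPr N z p) := by
  have h1p : 1 - ENNReal.ofReal p = ENNReal.ofReal (1 - p) := by
    rw [ENNReal.ofReal_sub _ hp0, ENNReal.ofReal_one]
  induction N generalizing z with
  | zero => cases z <;> simp [sumIid, PMF.pure_apply, binomPr]
  | succ N ih =>
    rw [sumIid_succ, conv_bernoulli_apply, h1p]
    rcases z with _ | z
    · simp [ih, binomPr_succ_zero, ENNReal.ofReal_mul (sub_nonneg.2 hp1)]
    · simp only [le_add_iff_nonneg_left, zero_le, if_true, add_tsub_cancel_right, ih,
        binomPr_succ_succ, ← ENNReal.ofReal_mul (sub_nonneg.2 hp1), ← ENNReal.ofReal_mul hp0]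
      rw [ENNReal.ofReal_add (mul_nonneg (sub_nonneg.2 hp1) (binomPr_nonneg hp0 hp1 _ _))
        (mul_nonneg hp0 (binomPr_nonneg hp0 hp1 _ _))]

lemma toOuterMeasure_sumIid_bernoulli_Iio {p : ℝ} (hp0 : 0 ≤ p) (hp1 : p ≤ 1) (N t : ℕ) :
    (sumIid (bernoulli (ENNReal.ofReal p) (ENNReal.ofReal_le_one.2 hp1)) N).toOuterMeasure
        (Iio t) = ENNReal.ofReal (∑ m ∈ Finset.range t, binomPr N m p) := by
  rw [← Finset.coe_range, PMF.toOuterMeasure_apply_finset,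
    ENNReal.ofReal_sum_of_nonneg fun m _ => binomPr_nonneg hp0 hp1 N m]
  simp only [sumIid_bernoulli_apply hp0 hp1]

theorem stochLE_gwIter {ξ : PMF ℕ} {q : ℝ≥0∞} (hq : q ≤ 1) (hext : ∀ m, gwGen ξ m 0 ≤ 1 - q)
    {N a : ℕ} (h : N ≤ a) (m : ℕ) : StochLE (sumIid (bernoulli q hq) N) (gwIter ξ m a) := by
  rw [gwIter_eq_sumIid]
  exact (stochLE_sumIid_of_le _ h).trans ((stochLE_bernoulli hq (hext m)).sumIid a)

noncomputable def extend (ξ : PMF ℕ) : ℕ → List ℕ → PMF (List ℕ)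
  | 0, l => PMF.pure l
  | m + 1, l => ((sumIid ξ l.headI).map (· :: l)).bind (extend ξ m)

lemma gwTraj_add (ξ : PMF ℕ) (j m : ℕ) : gwTraj ξ (j + m) = (gwTraj ξ j).bind (extend ξ m) := by
  induction m generalizing j with
  | zero => exact (PMF.bind_pure _).symm
  | succ m ih =>
    rw [show j + (m + 1) = j + 1 + m by omega, ih, gwTraj, PMF.bind_bind]
    rfl

lemma map_headI_extend (ξ : PMF ℕ) (m : ℕ) (l : List ℕ) :
    (extend ξ m l).map List.headI = gwIter ξ m l.headI := by
  induction m generalizing l with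
  | zero => exact PMF.pure_map _ _
  | succ m ih =>
    simp only [extend, PMF.map_bind, PMF.bind_map, Function.comp_def, ih, List.headI_cons]
    rfl

lemma map_drop_extend (ξ : PMF ℕ) (m : ℕ) (l : List ℕ) :
    (extend ξ m l).map (List.drop m) = PMF.pure l := by
  induction m generalizing l with
  | zero => exact PMF.pure_map _ _
  | succ m ih =>
    have hdrop : ∀ l', (extend ξ m l').map (List.drop (m + 1)) = PMF.pure l'.tail := fun l' => by
      rw [show List.drop (m + 1) = List.drop 1 ∘ List.drop m from
          funext fun _ => List.drop_drop.symm, ← PMF.map_comp, ih, PMF.pure_map, List.drop_one]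
    simp only [extend, PMF.map_bind, PMF.bind_map, Function.comp_def, hdrop, List.tail_cons]
    exact PMF.bind_const _ _

lemma length_of_mem_support_gwTraj {ξ : PMF ℕ} {k : ℕ} {l : List ℕ}
    (hl : l ∈ (gwTraj ξ k).support) : l.length = k + 1 := by
  induction k generalizing l with
  | zero => simp_all [gwTraj]
  | succ k ih =>
    simp only [gwTraj, PMF.mem_support_bind_iff, PMF.mem_support_map_iff] at hl
    obtain ⟨l', hl', z, -, rfl⟩ := hl
    simp [ih hl']

section Markov

variable {ξ : PMF ℕ} {m : ℕ} {S : Set (List ℕ)} {T : Set ℕ} {B : ℝ≥0∞}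

lemma toOuterMeasure_extend_le (hB : ∀ l ∈ S, (gwIter ξ m l.headI).toOuterMeasure T ≤ B)
    (l : List ℕ) :
    (extend ξ m l).toOuterMeasure {l' | l'.drop m ∈ S ∧ l'.headI ∈ T} ≤
      B * (extend ξ m l).toOuterMeasure (List.drop m ⁻¹' S) := by
  classical
  have hdrop : (extend ξ m l).toOuterMeasure (List.drop m ⁻¹' S) = if l ∈ S then 1 else 0 := by
    rw [← PMF.toOuterMeasure_map_apply, map_drop_extend, PMF.toOuterMeasure_pure_apply]
  by_cases hl : l ∈ S
  · rw [hdrop, if_pos hl, mul_one]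
    calc (extend ξ m l).toOuterMeasure {l' | l'.drop m ∈ S ∧ l'.headI ∈ T}
        ≤ (extend ξ m l).toOuterMeasure (List.headI ⁻¹' T) :=
          MeasureTheory.measure_mono fun l' h => h.2
      _ = (gwIter ξ m l.headI).toOuterMeasure T := by
          rw [← PMF.toOuterMeasure_map_apply, map_headI_extend]
      _ ≤ B := hB l hl
  · calc (extend ξ m l).toOuterMeasure {l' | l'.drop m ∈ S ∧ l'.headI ∈ T}
        ≤ (extend ξ m l).toOuterMeasure (List.drop m ⁻¹' S) :=
          MeasureTheory.measure_mono fun l' h => h.1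
      _ = 0 := by rw [hdrop, if_neg hl]
      _ ≤ _ := zero_le

theorem toOuterMeasure_gwTraj_drop_headI_le {k : ℕ} (hm : m ≤ k)
    (hB : ∀ l ∈ S, (gwIter ξ m l.headI).toOuterMeasure T ≤ B) :
    (gwTraj ξ k).toOuterMeasure {l | l.drop m ∈ S ∧ l.headI ∈ T} ≤
      B * (gwTraj ξ k).toOuterMeasure (List.drop m ⁻¹' S) := by
  obtain ⟨j, rfl⟩ := Nat.exists_eq_add_of_le' hm
  rw [gwTraj_add, PMF.toOuterMeasure_bind_apply, PMF.toOuterMeasure_bind_apply,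
    ← ENNReal.tsum_mul_left]
  exact ENNReal.tsum_le_tsum fun l =>
    (mul_le_mul_right (toOuterMeasure_extend_le hB l) _).trans_eq (mul_left_comm _ _ _)

end Markov

-- Trajectories list the most recent generation first, so for `l` of length `k + 1`,
-- `FirstHit N (l.drop m)` says that generation `k - m` is the first to reach size `N`.
def FirstHit (N : ℕ) : List ℕ → Prop
  | [] => False
  | a :: t => N ≤ a ∧ ∀ x ∈ t, x < N

lemma FirstHit.exists_le {N : ℕ} : ∀ {l : List ℕ}, FirstHit N l → ∃ x ∈ l, N ≤ x
  | a :: _, h => ⟨a, List.mem_cons_self, h.1⟩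

lemma FirstHit.le_headI {N : ℕ} : ∀ {l : List ℕ}, FirstHit N l → N ≤ l.headI
  | _ :: _, h => h.1

lemma exists_firstHit_drop {N : ℕ} {l : List ℕ} (h : ∃ x ∈ l, N ≤ x) :
    ∃ m < l.length, FirstHit N (l.drop m) := by
  induction l with
  | nil => simp at h
  | cons a t ih =>
    by_cases ht : ∃ x ∈ t, N ≤ x
    · obtain ⟨m, hm, hfirst⟩ := ih ht
      exact ⟨m + 1, by simpa using hm, hfirst⟩
    · simp only [not_exists, not_and, not_le] at ht
      obtain ⟨x, hx, hNx⟩ := h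
      have ha : N ≤ a := by
        rcases List.mem_cons.1 hx with rfl | hxt
        · exact hNx
        · exact absurd hNx (ht x hxt).not_ge
      exact ⟨0, by simp, ha, ht⟩

lemma eq_of_firstHit_drop {N : ℕ} {l : List ℕ} {m m' : ℕ} (h : FirstHit N (l.drop m))
    (h' : FirstHit N (l.drop m')) : m = m' := by
  induction l generalizing m m' with
  | nil => simp [FirstHit] at h
  | cons a t ih =>
    have later_not_first : ∀ {n}, FirstHit N (a :: t) → ¬FirstHit N (t.drop n) := fun ha ht => by
      obtain ⟨x, hx, hNx⟩ := ht.exists_le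
      exact (ha.2 x (List.mem_of_mem_drop hx)).not_ge hNx
    rcases m with _ | m <;> rcases m' with _ | m'
    · rfl
    · exact absurd h' (later_not_first h)
    · exact absurd h (later_not_first h')
    · exact congrArg (· + 1) (ih h h')

theorem toOuterMeasure_gwTraj_reach_and_headI_lt_le {ξ : PMF ℕ} {q : ℝ≥0∞} (hq : q ≤ 1)
    (hext : ∀ m, gwGen ξ m 0 ≤ 1 - q) (k N ω : ℕ) :
    (gwTraj ξ k).toOuterMeasure {l | (∃ x ∈ l, N ≤ x) ∧ l.headI < ω} ≤
      (sumIid (bernoulli q hq) N).toOuterMeasure (Iio ω) := by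
  set B := (sumIid (bernoulli q hq) N).toOuterMeasure (Iio ω)
  set H : Set (List ℕ) := {l | FirstHit N l}
  have hcover : {l | (∃ x ∈ l, N ≤ x) ∧ l.headI < ω} ∩ (gwTraj ξ k).support ⊆
      ⋃ m ∈ Finset.range (k + 1), {l | l.drop m ∈ H ∧ l.headI ∈ Iio ω} := by
    rintro l ⟨⟨hreach, hlt⟩, hl⟩
    obtain ⟨m, hm, hfirst⟩ := exists_firstHit_drop hreach
    rw [length_of_mem_support_gwTraj hl] at hm
    exact mem_biUnion (Finset.mem_coe.2 (Finset.mem_range.2 hm)) ⟨hfirst, hlt⟩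
  have hdisj : (Finset.range (k + 1) : Set ℕ).PairwiseDisjoint (List.drop · ⁻¹' H) :=
    fun m _ m' _ hne => Set.disjoint_left.2 fun l h h' => hne (eq_of_firstHit_drop h h')
  calc (gwTraj ξ k).toOuterMeasure {l | (∃ x ∈ l, N ≤ x) ∧ l.headI < ω}
      ≤ (gwTraj ξ k).toOuterMeasure
          (⋃ m ∈ Finset.range (k + 1), {l | l.drop m ∈ H ∧ l.headI ∈ Iio ω}) :=
        PMF.toOuterMeasure_mono _ hcover
    _ ≤ ∑ m ∈ Finset.range (k + 1),
          (gwTraj ξ k).toOuterMeasure {l | l.drop m ∈ H ∧ l.headI ∈ Iio ω} :=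
        MeasureTheory.measure_biUnion_finset_le _ _
    _ ≤ ∑ m ∈ Finset.range (k + 1), B * (gwTraj ξ k).toOuterMeasure (List.drop m ⁻¹' H) :=
        Finset.sum_le_sum fun m hm =>
          toOuterMeasure_gwTraj_drop_headI_le (Nat.lt_succ_iff.1 (Finset.mem_range.1 hm))
            fun l hl => stochLE_gwIter hq hext (FirstHit.le_headI hl) m ω
    _ = B * ∑ m ∈ Finset.range (k + 1), (gwTraj ξ k).toOuterMeasure (List.drop m ⁻¹' H) :=
        (Finset.mul_sum ..).symm
    _ ≤ B := mul_le_of_le_one_right' ((gwTraj ξ k).sum_toOuterMeasure_le_one hdisj)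

lemma exists_mem_ceilDiv_le_of_le_sum {l : List ℕ} {k s : ℕ} (hlen : l.length = k + 1)
    (hs : s ≤ l.sum) : ∃ x ∈ l, (s + k) / (k + 1) ≤ x := by
  by_contra! hlt
  set N := (s + k) / (k + 1)
  obtain ⟨a, t, rfl⟩ := List.exists_cons_of_length_eq_add_one hlen
  have hN : 0 < N := (Nat.zero_le a).trans_lt (hlt a List.mem_cons_self)
  have hsum := List.sum_le_card_nsmul _ (N - 1) fun x hx => Nat.le_sub_one_of_lt (hlt x hx)
  have hdiv : (k + 1) * (N - 1) + (k + 1) ≤ s + k := by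
    rw [← Nat.mul_add_one, Nat.sub_add_cancel hN, mul_comm]
    exact Nat.div_mul_le_self _ _
  rw [hlen, smul_eq_mul] at hsum
  omega

end GaltonWatson

open GaltonWatson in
theorem gw_total_vs_last_general (ξ : PMF ℕ) (p : ℝ)
    (hp : p = 1 - (⨆ m : ℕ, gwGen ξ m 0).toReal) (k ω : ℕ) :
    (∑' l : List ℕ, if ω ^ 2 ≤ l.sum ∧ l.headI < ω then gwTraj ξ k l else 0).toReal ≤
      ∑ m ∈ Finset.range ω, binomPr ((ω ^ 2 + k) / (k + 1)) m p := by
  have hs : (⨆ m : ℕ, gwGen ξ m 0) ≤ 1 := iSup_le fun m => PMF.coe_le_one _ _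
  have hp0 : 0 ≤ p :=
    hp ▸ sub_nonneg.2 (ENNReal.toReal_le_of_le_ofReal zero_le_one (by simpa using hs))
  have hp1 : p ≤ 1 := hp ▸ sub_le_self _ ENNReal.toReal_nonneg
  have hext : ∀ m, gwGen ξ m 0 ≤ 1 - ENNReal.ofReal p := fun m => by
    rw [hp, ENNReal.ofReal_sub _ ENNReal.toReal_nonneg, ENNReal.ofReal_one,
      ENNReal.ofReal_toReal (ne_top_of_le_ne_top ENNReal.one_ne_top hs),
      ENNReal.sub_sub_cancel ENNReal.one_ne_top hs]
    exact le_iSup (fun m => gwGen ξ m 0) m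
  have hE : {l : List ℕ | ω ^ 2 ≤ l.sum ∧ l.headI < ω} ∩ (gwTraj ξ k).support ⊆
      {l | (∃ x ∈ l, (ω ^ 2 + k) / (k + 1) ≤ x) ∧ l.headI < ω} := fun l ⟨⟨hsum, hlt⟩, hl⟩ =>
    ⟨exists_mem_ceilDiv_le_of_le_sum (length_of_mem_support_gwTraj hl) hsum, hlt⟩
  refine ENNReal.toReal_le_of_le_ofReal
    (Finset.sum_nonneg fun m _ => binomPr_nonneg hp0 hp1 _ _) ?_
  rw [← toOuterMeasure_sumIid_bernoulli_Iio hp0 hp1]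
  calc ∑' l : List ℕ, (if ω ^ 2 ≤ l.sum ∧ l.headI < ω then gwTraj ξ k l else 0)
      = (gwTraj ξ k).toOuterMeasure {l | ω ^ 2 ≤ l.sum ∧ l.headI < ω} := by
        simp only [PMF.toOuterMeasure_apply, Set.indicator_apply, Set.mem_ofPred_eq]
    _ ≤ _ := (PMF.toOuterMeasure_mono _ hE).trans
          (toOuterMeasure_gwTraj_reach_and_headI_lt_le _ hext _ _ _)

/-- Let `T` be a Galton–Watson tree with survival probability `p > 0`, and fix
`k ≥ 1`, `ω ≥ 2` with `ω²/(k+1) ≥ ω log² n` for a parameter `n`.  Then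
`P(∑_{j=0}^k Z_j ≥ ω² and Z_k < ω) ≤ P(Bin(⌈ω²/(k+1)⌉, p) < ω)`. -/
theorem gw_total_vs_last (ξ : PMF ℕ) (p : ℝ)
    (hp : p = 1 - (⨆ m : ℕ, gwGen ξ m 0).toReal) (hppos : 0 < p)
    (k ω n : ℕ) (hk : 1 ≤ k) (hω : 2 ≤ ω)
    (hn : (ω : ℝ) * Real.log n ^ 2 ≤ (ω : ℝ) ^ 2 / ((k : ℝ) + 1)) :
    (∑' l : List ℕ, if ω ^ 2 ≤ l.sum ∧ l.headI < ω then gwTraj ξ k l else 0).toReal ≤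
      ∑ m ∈ Finset.range ω, binomPr ((ω ^ 2 + k) / (k + 1)) m p :=
  gw_total_vs_last_general ξ p hp k ω
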